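/- Equivariance of the moving frame matrix for the projective SL(2) action: let A(x,u_x,u_xx) be the 3×3 matrix with rows [((xu_xx+u_x)/u_x, 2xu_x, −u_xx(xu_xx+2u_x)/(2u_x³)], [u_xx/(2u_x), u_x, −u_xx²/(4u_x³)], [−x(xu_xx+2u_x)/(2u_x), −x²u_x, (xu_xx+2u_x)²/(4u_x³)]. Under the transformation x̃ = (ax+b)/(cx+d), ũ_x̃ = u_x(cx+d)², ũ_x̃x̃ = (cx+d)³(u_xx(cx+d) + 2c u_x) — the prolonged action with ad−bc=1 — one has A(x̃, ũ_x̃, ũ_x̃x̃) = R(a,b,c) A(x,u_x,u_xx), where R(a,b,c) = [[ad+bc, 2bd, −2ac],[cd, d², −c²],[−ab, −b², a²]], d = (1+bc)/a. -/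

import Mathlib

/-!
`Amat` is the adjoint representation evaluated on a moving frame. With `T x = !![1, x; 0, 1]`,
`Amat x u_x u_xx = R(T x) · Amat 0 u_x u_xx`; the jet over `0` is not normalised further, since
that would need `√u_x`. For `g ∈ SL(2)` the Gauss decomposition `g · T x = T x̃ · h` has
`h = !![e⁻¹, 0; c, e]` with `e = cx + d`; `h` fixes `0` and on jets over `0` acts by
`Amat 0 ũ_x ũ_xx = R(h) · Amat 0 u_x u_xx`. As `R` is multiplicative,
`Amat(g · z) = R(T x̃) R(h) Amat 0 u_x u_xx = R(g) R(T x) Amat 0 u_x u_xx = R(g) Amat z`.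
-/

/-- The moving frame matrix `A(x,u_x,u_xx)` for the projective SL(2) action. -/
noncomputable def Amat (x ux uxx : ℝ) : Matrix (Fin 3) (Fin 3) ℝ :=
  !![(x*uxx + ux)/ux,            2*x*ux,      -(uxx*(x*uxx + 2*ux))/(2*ux^3);
     uxx/(2*ux),                 ux,          -(uxx^2)/(4*ux^3);
     -(x*(x*uxx + 2*ux))/(2*ux), -(x^2)*ux,   (x*uxx + 2*ux)^2/(4*ux^3)]

/-- The adjoint representation `R(a,b,c)` of SL(2), with `d = (1+bc)/a`. -/
noncomputable def Rmat (a b c : ℝ) : Matrix (Fin 3) (Fin 3) ℝ :=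
  !![a*((1 + b*c)/a) + b*c, 2*b*((1 + b*c)/a), -2*a*c;
     c*((1 + b*c)/a),       ((1 + b*c)/a)^2,   -c^2;
     -a*b,                  -b^2,              a^2]

def sl2Adjoint {R : Type*} [CommRing R] (M : Matrix (Fin 2) (Fin 2) R) :
    Matrix (Fin 3) (Fin 3) R :=
  !![M 0 0 * M 1 1 + M 0 1 * M 1 0, 2 * M 0 1 * M 1 1, -2 * M 0 0 * M 1 0;
     M 1 0 * M 1 1,                 M 1 1 ^ 2,         -M 1 0 ^ 2;
     -M 0 0 * M 0 1,                -M 0 1 ^ 2,        M 0 0 ^ 2]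

theorem sl2Adjoint_mul {R : Type*} [CommRing R] (M N : Matrix (Fin 2) (Fin 2) R) :
    sl2Adjoint (M * N) = sl2Adjoint M * sl2Adjoint N := by
  ext i j
  fin_cases i <;> fin_cases j <;>
    simp [sl2Adjoint, Matrix.mul_apply, Fin.sum_univ_two, Fin.sum_univ_three] <;> ring

theorem Rmat_eq_sl2Adjoint (a b c : ℝ) :
    Rmat a b c = sl2Adjoint !![a, b; c, (1 + b*c)/a] := by
  ext i j
  fin_cases i <;> fin_cases j <;> simp [Rmat, sl2Adjoint]

theorem mul_upperUnipotent_eq_upperUnipotent_mul_lower (a b c d x : ℝ)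
    (hdet : a * d - b * c = 1) (he : c * x + d ≠ 0) :
    !![a, b; c, d] * !![1, x; 0, 1]
      = !![1, (a*x + b)/(c*x + d); 0, 1] * !![(c*x + d)⁻¹, 0; c, c*x + d] := by
  rw [Matrix.mul_fin_two, Matrix.mul_fin_two]
  ext i j
  fin_cases i <;> fin_cases j <;> simp [div_mul_cancel₀ _ he]
  field_simp
  linear_combination hdet

theorem Amat_eq_sl2Adjoint_upperUnipotent_mul (x ux uxx : ℝ) (hux : ux ≠ 0) :
    Amat x ux uxx = sl2Adjoint !![1, x; 0, 1] * Amat 0 ux uxx := by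
  ext i j
  fin_cases i <;> fin_cases j <;>
    simp [Amat, sl2Adjoint, Matrix.mul_apply, Fin.sum_univ_three] <;> field_simp <;> ring

theorem Amat_zero_lower_equivariant (c e ux uxx : ℝ) (he : e ≠ 0) (hux : ux ≠ 0) :
    Amat 0 (ux * e^2) (e^3 * (uxx * e + 2*c*ux))
      = sl2Adjoint !![e⁻¹, 0; c, e] * Amat 0 ux uxx := by
  ext i j
  fin_cases i <;> fin_cases j <;>
    simp [Amat, sl2Adjoint, Matrix.mul_apply, Fin.sum_univ_three] <;> field_simp <;> ring

/-- Equivariance of the moving frame matrix under the prolonged projective SL(2) action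
`x̃ = (ax+b)/(cx+d)`, `ũ_x̃ = u_x(cx+d)²`, `ũ_x̃x̃ = (cx+d)³(u_xx(cx+d) + 2c u_x)`,
with `d = (1+bc)/a`:  `A(x̃, ũ_x̃, ũ_x̃x̃) = R(a,b,c) A(x,u_x,u_xx)`. -/
theorem frame_equivariance (a b c x ux uxx : ℝ) (ha : a ≠ 0) (hux : ux ≠ 0)
    (hc : c*x + (1 + b*c)/a ≠ 0) :
    Amat ((a*x + b)/(c*x + (1 + b*c)/a))
        (ux * (c*x + (1 + b*c)/a)^2)
        ((c*x + (1 + b*c)/a)^3 * (uxx * (c*x + (1 + b*c)/a) + 2*c*ux))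
      = Rmat a b c * Amat x ux uxx := by
  set d := (1 + b*c)/a
  set e := c*x + d
  have hdet : a * d - b * c = 1 := by simp only [d]; field_simp; ring
  calc Amat ((a*x + b)/e) (ux * e^2) (e^3 * (uxx * e + 2*c*ux))
      = sl2Adjoint !![1, (a*x + b)/e; 0, 1] * (sl2Adjoint !![e⁻¹, 0; c, e] * Amat 0 ux uxx) := by
        rw [Amat_eq_sl2Adjoint_upperUnipotent_mul _ _ _ (mul_ne_zero hux (pow_ne_zero 2 hc)),
          Amat_zero_lower_equivariant c e ux uxx hc hux]
    _ = sl2Adjoint !![a, b; c, d] * (sl2Adjoint !![1, x; 0, 1] * Amat 0 ux uxx) := by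
        rw [← Matrix.mul_assoc, ← Matrix.mul_assoc, ← sl2Adjoint_mul, ← sl2Adjoint_mul,
          mul_upperUnipotent_eq_upperUnipotent_mul_lower a b c d x hdet hc]
    _ = Rmat a b c * Amat x ux uxx := by
        rw [Rmat_eq_sl2Adjoint, ← Amat_eq_sl2Adjoint_upperUnipotent_mul x ux uxx hux]
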